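/- Let p be a stochastic tournament on a finite set V with |V| = n ≥ 3 and let ε > 0. Suppose p is ε-far from reversible in the L1 sense: for every reversible stochastic tournament p' on V, the sum over all unordered pairs {x, y} of distinct vertices of |p x y − p' x y| is at least ε * C(n, 2). Then the number of unbalanced unordered triangles of p, i.e., the number of 3-element subsets {x, y, z} of V with p x y * p y z * p z x ≠ p x z * p z y * p y x, is at least ε * C(n, 3). -/

import Mathlib

/-!
Fix a vertex `z` and let `r x = p x z / p z x` be the odds of `x` against `z`. The Bradley–Terry
tournament `r x / (r x + r y)` is reversible, with stationary weights proportional to `1 / r`,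
and it agrees with `p` on every pair `{x, y}` for which the triangle `{x, y, z}` is balanced.
So `p` is within `L¹` distance (number of unbalanced triangles through `z`) of a reversible
tournament, and `ε * C(n, 2)` bounds that number for every `z`. Summing over `z` counts each
unbalanced triangle three times, and `3 * C(n, 3) ≤ n * C(n, 2)`.
-/

open Finset

noncomputable section

variable {V : Type*}

def IsStochasticTournament (p : V → V → ℝ) : Prop :=
  ∀ x y : V, x ≠ y → 0 < p x y ∧ p x y < 1 ∧ p x y + p y x = 1

def IsReversible [Fintype V] (p : V → V → ℝ) : Prop :=
  ∃ π : V → ℝ, (∀ x, 0 < π x) ∧ ∑ x, π x = 1 ∧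
    ∀ x y : V, x ≠ y → π x * p x y = π y * p y x

def IsBalanced (p : V → V → ℝ) (x y z : V) : Prop :=
  p x y * p y z * p z x = p x z * p z y * p y x

instance (p : V → V → ℝ) (x y z : V) : Decidable (IsBalanced p x y z) :=
  inferInstanceAs (Decidable (_ = _))

theorem pairwise_ne_of_not_isBalanced {p : V → V → ℝ} {x y z : V} (h : ¬IsBalanced p x y z) :
    x ≠ y ∧ x ≠ z ∧ y ≠ z := by
  refine ⟨?_, ?_, ?_⟩ <;> rintro rfl <;> exact h (by unfold IsBalanced; ring)

section BradleyTerry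

variable {r : V → ℝ}

def bradleyTerry (r : V → ℝ) (x y : V) : ℝ := r x / (r x + r y)

theorem isStochasticTournament_bradleyTerry (hr : ∀ x, 0 < r x) :
    IsStochasticTournament (bradleyTerry r) := by
  intro x y _
  have hx := hr x
  have hy := hr y
  refine ⟨by unfold bradleyTerry; positivity, (div_lt_one (by positivity)).2 (by linarith), ?_⟩
  unfold bradleyTerry
  field_simp
  ring

theorem isReversible_bradleyTerry [Fintype V] [Nonempty V] (hr : ∀ x, 0 < r x) :
    IsReversible (bradleyTerry r) := by
  have hS : 0 < ∑ x, (r x)⁻¹ := sum_pos (fun x _ => inv_pos.2 (hr x)) univ_nonempty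
  refine ⟨fun x => (r x)⁻¹ / ∑ w, (r w)⁻¹, fun x => div_pos (inv_pos.2 (hr x)) hS,
    by rw [← sum_div, div_self hS.ne'], fun x y _ => ?_⟩
  have hx := hr x
  have hy := hr y
  unfold bradleyTerry
  field_simp
  ring

theorem bradleyTerry_eq_of_mul_eq {p : V → V → ℝ} {x y : V} (hr : ∀ x, 0 < r x)
    (hsum : p x y + p y x = 1) (h : r x * p y x = r y * p x y) :
    bradleyTerry r x y = p x y := by
  have hx := hr x
  have hy := hr y
  rw [bradleyTerry, div_eq_iff (by positivity)]
  linear_combination (-r x) * hsum + h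

end BradleyTerry

section WinOdds

variable [DecidableEq V] {p : V → V → ℝ}

/-- The odds `p x z / p z x` of `x` against `z`, set to `1` at `x = z` whatever `p z z` is. -/
def winOdds (p : V → V → ℝ) (z x : V) : ℝ := if x = z then 1 else p x z / p z x

@[simp]
theorem winOdds_self (p : V → V → ℝ) (z : V) : winOdds p z z = 1 := if_pos rfl

theorem winOdds_pos (hp : IsStochasticTournament p) (z x : V) : 0 < winOdds p z x := by
  unfold winOdds
  split_ifs with hx
  · exact one_pos
  · exact div_pos (hp x z hx).1 (hp z x (Ne.symm hx)).1

theorem winOdds_mul_eq (hp : IsStochasticTournament p) {x y z : V}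
    (h : IsBalanced p x y z) :
    winOdds p z x * p y x = winOdds p z y * p x y := by
  by_cases hxy : x = y
  · rw [hxy]
  have odds_mul {a : V} (ha : a ≠ z) : winOdds p z a * p z a = p a z := by
    rw [winOdds, if_neg ha, div_mul_cancel₀ _ (hp z a (Ne.symm ha)).1.ne']
  rcases eq_or_ne x z with rfl | hxz
  · rw [winOdds_self, one_mul, odds_mul (Ne.symm hxy)]
  rcases eq_or_ne y z with rfl | hyz
  · rw [winOdds_self, one_mul, odds_mul hxy]
  have := (hp z x hxz.symm).1
  have := (hp z y hyz.symm).1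
  rw [winOdds, winOdds, if_neg hxz, if_neg hyz]
  field_simp
  unfold IsBalanced at h
  linear_combination -h

theorem abs_sub_bradleyTerry_winOdds_le (hp : IsStochasticTournament p) {x y : V} (z : V)
    (hxy : x ≠ y) :
    |p x y - bradleyTerry (winOdds p z) x y| ≤ if IsBalanced p x y z then 0 else 1 := by
  split_ifs with h
  · rw [bradleyTerry_eq_of_mul_eq (winOdds_pos hp z) (hp x y hxy).2.2 (winOdds_mul_eq hp h),
      sub_self, abs_zero]
  · have := hp x y hxy
    have := isStochasticTournament_bradleyTerry (winOdds_pos hp z) x y hxy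
    exact abs_sub_le_iff.2 ⟨by linarith, by linarith⟩

end WinOdds

section Counting

variable [Fintype V] [DecidableEq V]

open Classical in
def unbalancedTriangles (p : V → V → ℝ) : Finset (Finset V) :=
  {T | ∃ x y z : V, x ≠ y ∧ x ≠ z ∧ y ≠ z ∧ T = {x, y, z} ∧ ¬IsBalanced p x y z}

theorem card_eq_three_of_mem_unbalancedTriangles {p : V → V → ℝ} {T : Finset V}
    (hT : T ∈ unbalancedTriangles p) : #T = 3 := by
  simp only [unbalancedTriangles, mem_filter, mem_univ, true_and] at hT
  obtain ⟨x, y, z, hxy, hxz, hyz, rfl, -⟩ := hT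
  exact card_eq_three.2 ⟨x, y, z, hxy, hxz, hyz, rfl⟩

theorem sum_card_filter_mem {α : Type*} [Fintype α] [DecidableEq α] (B : Finset (Finset α)) :
    ∑ a, #{T ∈ B | a ∈ T} = ∑ T ∈ B, #T := by
  simp only [card_filter]
  rw [sum_comm]
  simp

theorem sum_card_filter_mem_unbalancedTriangles (p : V → V → ℝ) :
    ∑ z, #{T ∈ unbalancedTriangles p | z ∈ T} = 3 * #(unbalancedTriangles p) := by
  rw [sum_card_filter_mem, sum_const_nat fun _ => card_eq_three_of_mem_unbalancedTriangles,
    mul_comm]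

theorem card_not_isBalanced_le (p : V → V → ℝ) (z : V) :
    #{q : V × V | ¬IsBalanced p q.1 q.2 z} ≤ 2 * #{T ∈ unbalancedTriangles p | z ∈ T} := by
  refine card_le_mul_card_image_of_maps_to (f := fun q => {q.1, q.2, z}) ?_ 2 fun T hT => ?_
  · intro q hq
    simp only [mem_filter, mem_univ, true_and] at hq
    obtain ⟨hxy, hxz, hyz⟩ := pairwise_ne_of_not_isBalanced hq
    simp only [unbalancedTriangles, mem_filter, mem_univ, true_and, mem_insert, mem_singleton,
      or_true, and_true]
    exact ⟨q.1, q.2, z, hxy, hxz, hyz, rfl, hq⟩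
  · obtain ⟨hT, hzT⟩ := mem_filter.1 hT
    calc _ ≤ #(T.erase z).offDiag := card_le_card fun q hq => ?_
      _ = 2 := by
        rw [offDiag_card, card_erase_of_mem hzT, card_eq_three_of_mem_unbalancedTriangles hT]
    simp only [mem_filter, mem_univ, true_and] at hq
    obtain ⟨hq, rfl⟩ := hq
    obtain ⟨hxy, hxz, hyz⟩ := pairwise_ne_of_not_isBalanced hq
    simp [mem_offDiag, hxy, hxz, hyz]

theorem exists_isReversible_sum_abs_sub_le {p : V → V → ℝ} (hp : IsStochasticTournament p)
    (z : V) :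
    ∃ p' : V → V → ℝ, IsStochasticTournament p' ∧ IsReversible p' ∧
      (1 / 2) * ∑ x, ∑ y ∈ univ.erase x, |p x y - p' x y| ≤
        #{T ∈ unbalancedTriangles p | z ∈ T} := by
  have : Nonempty V := ⟨z⟩
  refine ⟨bradleyTerry (winOdds p z), isStochasticTournament_bradleyTerry (winOdds_pos hp z),
    isReversible_bradleyTerry (winOdds_pos hp z), ?_⟩
  have hpairs : ∑ x, ∑ y ∈ univ.erase x, |p x y - bradleyTerry (winOdds p z) x y| ≤
      #{q : V × V | ¬IsBalanced p q.1 q.2 z} := by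
    calc _ ≤ ∑ x, ∑ y, if IsBalanced p x y z then (0 : ℝ) else 1 := by
          refine sum_le_sum fun x _ => ?_
          refine (sum_le_sum fun y hy => abs_sub_bradleyTerry_winOdds_le hp z ?_).trans ?_
          · exact (ne_of_mem_erase hy).symm
          · exact sum_le_sum_of_subset_of_nonneg (subset_univ _) fun _ _ _ => by
              split_ifs <;> norm_num
      _ = _ := by
        rw [← Fintype.sum_prod_type', card_filter]
        push_cast
        simp only [ite_not]
  have hcount : (#{q : V × V | ¬IsBalanced p q.1 q.2 z} : ℝ) ≤
      2 * #{T ∈ unbalancedTriangles p | z ∈ T} := by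
    exact_mod_cast card_not_isBalanced_le p z
  linarith

end Counting

end

theorem far_from_reversible_many_unbalanced_general {V : Type*} [Fintype V] [DecidableEq V]
    (p : V → V → ℝ)
    (hp : ∀ x y : V, x ≠ y → 0 < p x y ∧ p x y < 1 ∧ p x y + p y x = 1)
    (n : ℕ) (hn : Fintype.card V = n)
    (ε : ℝ) (hε : 0 < ε)
    (hfar : ∀ p' : V → V → ℝ,
      (∀ x y : V, x ≠ y → 0 < p' x y ∧ p' x y < 1 ∧ p' x y + p' y x = 1) →
      (∃ π : V → ℝ, (∀ x, 0 < π x) ∧ (∑ x, π x) = 1 ∧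
        ∀ x y : V, x ≠ y → π x * p' x y = π y * p' y x) →
      ε * (n.choose 2 : ℝ) ≤
        (1 / 2) * ∑ x : V, ∑ y ∈ Finset.univ.erase x, |p x y - p' x y|) :
    ε * (n.choose 3 : ℝ) ≤
      ({T : Finset V | ∃ x y z : V, x ≠ y ∧ x ≠ z ∧ y ≠ z ∧ T = {x, y, z} ∧
        p x y * p y z * p z x ≠ p x z * p z y * p y x}.ncard : ℝ) := by
  have hcard : {T : Finset V | ∃ x y z : V, x ≠ y ∧ x ≠ z ∧ y ≠ z ∧ T = {x, y, z} ∧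
      p x y * p y z * p z x ≠ p x z * p z y * p y x}.ncard = #(unbalancedTriangles p) := by
    rw [← Set.ncard_coe_finset]
    congr 1
    ext T
    simp [unbalancedTriangles, IsBalanced]
  have hlocal (z : V) : ε * n.choose 2 ≤ #{T ∈ unbalancedTriangles p | z ∈ T} := by
    obtain ⟨p', hp', hrev, hclose⟩ := exists_isReversible_sum_abs_sub_le hp z
    exact (hfar p' hp' hrev).trans hclose
  have htotal : n * (ε * n.choose 2) ≤ 3 * #(unbalancedTriangles p) := by
    have := sum_le_sum fun z (_ : z ∈ univ) => hlocal z
    rwa [sum_const, card_univ, hn, nsmul_eq_mul, ← Nat.cast_sum,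
      sum_card_filter_mem_unbalancedTriangles, Nat.cast_mul, Nat.cast_ofNat] at this
  have hchoose : (n.choose 3 : ℝ) * 3 ≤ n.choose 2 * n := by
    exact_mod_cast (Nat.choose_succ_right_eq n 2).trans_le (Nat.mul_le_mul_left _ (Nat.sub_le n 2))
  rw [hcard]
  linarith [mul_le_mul_of_nonneg_left hchoose hε.le]

/-- If a stochastic tournament `p` is `ε`-far (in the `L¹` sense, summing over
unordered pairs, i.e. half the ordered pair sum) from every reversible
stochastic tournament, then `p` has at least `ε * C(n, 3)` unbalanced
unordered triangles. -/
theorem far_from_reversible_many_unbalanced {V : Type*} [Fintype V] [DecidableEq V]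
    (p : V → V → ℝ)
    (hp : ∀ x y : V, x ≠ y → 0 < p x y ∧ p x y < 1 ∧ p x y + p y x = 1)
    (n : ℕ) (hn : Fintype.card V = n) (hn3 : 3 ≤ n)
    (ε : ℝ) (hε : 0 < ε)
    (hfar : ∀ p' : V → V → ℝ,
      (∀ x y : V, x ≠ y → 0 < p' x y ∧ p' x y < 1 ∧ p' x y + p' y x = 1) →
      (∃ π : V → ℝ, (∀ x, 0 < π x) ∧ (∑ x, π x) = 1 ∧
        ∀ x y : V, x ≠ y → π x * p' x y = π y * p' y x) →
      ε * (n.choose 2 : ℝ) ≤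
        (1 / 2) * ∑ x : V, ∑ y ∈ Finset.univ.erase x, |p x y - p' x y|) :
    ε * (n.choose 3 : ℝ) ≤
      ({T : Finset V | ∃ x y z : V, x ≠ y ∧ x ≠ z ∧ y ≠ z ∧ T = {x, y, z} ∧
        p x y * p y z * p z x ≠ p x z * p z y * p y x}.ncard : ℝ) :=
  far_from_reversible_many_unbalanced_general p hp n hn ε hε hfar
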